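/- Let g(z) = arccos(e^{-z²/2}) for z ≥ 0. Then g is concave, strictly increasing, satisfies g(0) = 0, g(z) ≤ z for all z ≥ 0, lim_{z→0⁺} g(z)/z = 1, and lim_{z→∞} g(z) = π/2. -/

import Mathlib

open Real Set Filter Topology

/-- `g(z) = arccos(e^{-z²/2})`, the inverse of `√ℓ` with `ℓ(d) = -log(cos² d)`. -/
noncomputable def gGHK : ℝ → ℝ := fun z => Real.arccos (Real.exp (-z ^ 2 / 2))

private lemma uGHK_le_one (z : ℝ) : Real.exp (-z ^ 2 / 2) ≤ 1 :=
  Real.exp_le_one_iff.mpr (by nlinarith [sq_nonneg z])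

private lemma uGHK_lt_one {z : ℝ} (hz : 0 < z) : Real.exp (-z ^ 2 / 2) < 1 :=
  Real.exp_lt_one_iff.mpr (by nlinarith)

private lemma uGHK_mem (z : ℝ) : Real.exp (-z ^ 2 / 2) ∈ Set.Icc (-1 : ℝ) 1 :=
  ⟨by linarith [Real.exp_pos (-z ^ 2 / 2)], uGHK_le_one z⟩

private lemma arccos_le_arccos' {x y : ℝ} (hx : -1 ≤ x) (hy : y ≤ 1) (hxy : x ≤ y) :
    Real.arccos y ≤ Real.arccos x := by
  rcases eq_or_lt_of_le hxy with rfl | h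
  · exact le_refl _
  · exact (Real.strictAntiOn_arccos ⟨hx, le_of_lt (lt_of_lt_of_le h hy)⟩
      ⟨le_trans hx hxy, hy⟩ h).le

/-- `cos z ≤ exp (-z²/2)` for `0 ≤ z < π/2`. -/
private lemma cos_le_exp_neg_sq {z : ℝ} (h0 : 0 ≤ z) (h1 : z < π / 2) :
    Real.cos z ≤ Real.exp (-z ^ 2 / 2) := by
  have hcos : ∀ x ∈ Set.Ico (0 : ℝ) (π / 2), 0 < Real.cos x := fun x hx =>
    Real.cos_pos_of_mem_Ioo ⟨by linarith [hx.1, Real.pi_pos], hx.2⟩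
  set h : ℝ → ℝ := fun x => -x ^ 2 / 2 - Real.log (Real.cos x) with hh
  have hderiv : ∀ x ∈ Set.Ico (0 : ℝ) (π / 2),
      HasDerivAt h (Real.tan x - x) x := by
    intro x hx
    have hc := (hcos x hx).ne'
    have d1 : HasDerivAt (fun x : ℝ => -x ^ 2 / 2) (-x) x := by
      have := ((hasDerivAt_pow 2 x).neg.div_const 2)
      refine this.congr_deriv ?_
      ring
    have d2 : HasDerivAt (fun x : ℝ => Real.log (Real.cos x))
        (-Real.sin x / Real.cos x) x := (Real.hasDerivAt_cos x).log hc
    have := d1.sub d2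
    refine this.congr_deriv ?_
    rw [Real.tan_eq_sin_div_cos]
    ring
  have hmono : MonotoneOn h (Set.Ico (0 : ℝ) (π / 2)) := by
    apply monotoneOn_of_deriv_nonneg (convex_Ico 0 (π / 2))
    · intro x hx
      exact ((hderiv x hx).continuousAt).continuousWithinAt
    · intro x hx
      rw [interior_Ico] at hx
      exact ((hderiv x ⟨hx.1.le, hx.2⟩).differentiableAt).differentiableWithinAt
    · intro x hx
      rw [interior_Ico] at hx
      rw [(hderiv x ⟨hx.1.le, hx.2⟩).deriv]
      have := Real.lt_tan hx.1 hx.2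
      linarith
  have h0z : h 0 ≤ h z := hmono ⟨le_refl 0, by linarith [Real.pi_pos]⟩ ⟨h0, h1⟩ h0
  have hh0 : h 0 = 0 := by simp [hh]
  have hlog : Real.log (Real.cos z) ≤ -z ^ 2 / 2 := by
    have := h0z; rw [hh0] at this; simp only [hh] at this; linarith
  calc Real.cos z = Real.exp (Real.log (Real.cos z)) :=
        (Real.exp_log (hcos z ⟨h0, h1⟩)).symm
    _ ≤ Real.exp (-z ^ 2 / 2) := Real.exp_le_exp.mpr hlog

private lemma gGHK_le {z : ℝ} (hz : 0 ≤ z) : gGHK z ≤ z := by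
  rcases lt_or_ge z (π / 2) with h | h
  · have hcos := cos_le_exp_neg_sq hz h
    have : gGHK z ≤ Real.arccos (Real.cos z) :=
      arccos_le_arccos' (Real.neg_one_le_cos z) (uGHK_le_one z) hcos
    rwa [Real.arccos_cos hz (by linarith [Real.pi_pos])] at this
  · exact le_trans (Real.arccos_le_pi_div_two.mpr (Real.exp_pos _).le) h

/-- the derivative of `gGHK` at `z`. -/
private noncomputable def DGHK (z : ℝ) : ℝ :=
  z * Real.exp (-z ^ 2 / 2) / Real.sqrt (1 - Real.exp (-z ^ 2 / 2) ^ 2)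

private lemma hasDerivAt_gGHK {z : ℝ} (hz : 0 < z) : HasDerivAt gGHK (DGHK z) z := by
  have h1 : Real.exp (-z ^ 2 / 2) ≠ -1 := by
    have := Real.exp_pos (-z ^ 2 / 2); linarith
  have h2 : Real.exp (-z ^ 2 / 2) ≠ 1 := (uGHK_lt_one hz).ne
  have dinner : HasDerivAt (fun z : ℝ => Real.exp (-z ^ 2 / 2))
      (Real.exp (-z ^ 2 / 2) * (-z)) z := by
    have d1 : HasDerivAt (fun x : ℝ => -x ^ 2 / 2) (-z) z := by
      have := ((hasDerivAt_pow 2 z).neg.div_const 2)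
      refine this.congr_deriv ?_
      ring
    exact d1.exp
  have douter := Real.hasDerivAt_arccos h1 h2
  have := douter.comp z dinner
  refine this.congr_deriv ?_
  unfold DGHK
  ring

/-- `t (e^s - 1) ≤ s (e^t - 1)` for `0 < s ≤ t`. -/
private lemma slope_exp_mono {s t : ℝ} (hs : 0 < s) (hst : s ≤ t) :
    t * (Real.exp s - 1) ≤ s * (Real.exp t - 1) := by
  have ht : 0 < t := lt_of_lt_of_le hs hst
  have hl0 : (0:ℝ) < s / t := div_pos hs ht
  have hl1 : s / t ≤ 1 := div_le_one_of_le₀ hst ht.le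
  have hcv := convexOn_exp.2 (Set.mem_univ t) (Set.mem_univ (0:ℝ)) hl0.le
    (by linarith : (0:ℝ) ≤ 1 - s / t) (by ring)
  simp only [smul_eq_mul, mul_zero, add_zero, Real.exp_zero, mul_one] at hcv
  have hst' : s / t * t = s := div_mul_cancel₀ s ht.ne'
  rw [hst'] at hcv
  have : Real.exp s - 1 ≤ s / t * (Real.exp t - 1) := by linarith
  calc t * (Real.exp s - 1) ≤ t * (s / t * (Real.exp t - 1)) := by
        apply mul_le_mul_of_nonneg_left this ht.le
    _ = s * (Real.exp t - 1) := by field_simp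
  
private lemma S_pos {z : ℝ} (hz : 0 < z) : 0 < 1 - Real.exp (-z ^ 2 / 2) ^ 2 := by
  have h1 := uGHK_lt_one hz
  have h0 := Real.exp_pos (-z ^ 2 / 2)
  nlinarith

private lemma DGHK_pos {z : ℝ} (hz : 0 < z) : 0 < DGHK z := by
  unfold DGHK
  have := Real.exp_pos (-z ^ 2 / 2)
  exact div_pos (by positivity) (Real.sqrt_pos.mpr (S_pos hz))

private lemma DGHK_sq {z : ℝ} (hz : 0 < z) :
    DGHK z ^ 2 = z ^ 2 / (Real.exp (z ^ 2) - 1) := by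
  unfold DGHK
  have hS := S_pos hz
  have he : Real.exp (-z ^ 2 / 2) ^ 2 = Real.exp (-z ^ 2) := by
    rw [← Real.exp_nat_mul]; congr 1; push_cast; ring
  rw [div_pow, Real.sq_sqrt hS.le, mul_pow, he]
  have hmul : Real.exp (-z ^ 2) * Real.exp (z ^ 2) = 1 := by
    rw [← Real.exp_add]; simp
  have hez : (1:ℝ) < Real.exp (z ^ 2) := by
    calc (1:ℝ) = Real.exp 0 := Real.exp_zero.symm
      _ < _ := Real.exp_lt_exp.mpr (by positivity)
  have hd1 : (0:ℝ) < 1 - Real.exp (-z ^ 2 / 2) ^ 2 := hS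
  rw [he] at hd1
  rw [div_eq_div_iff (by linarith) (by linarith)]
  linear_combination (z ^ 2) * hmul

private lemma DGHK_anti : AntitoneOn DGHK (Set.Ioi (0:ℝ)) := by
  intro a ha b hb hab
  have ha' : (0:ℝ) < a := ha
  have hb' : (0:ℝ) < b := hb
  have hsq : DGHK b ^ 2 ≤ DGHK a ^ 2 := by
    rw [DGHK_sq ha', DGHK_sq hb']
    have hsa : (0:ℝ) < a ^ 2 := by positivity
    have hsab : a ^ 2 ≤ b ^ 2 := by nlinarith
    have hea : (1:ℝ) < Real.exp (a ^ 2) := by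
      calc (1:ℝ) = Real.exp 0 := Real.exp_zero.symm
        _ < _ := Real.exp_lt_exp.mpr (by positivity)
    have heb : (1:ℝ) < Real.exp (b ^ 2) := by
      calc (1:ℝ) = Real.exp 0 := Real.exp_zero.symm
        _ < _ := Real.exp_lt_exp.mpr (by positivity)
    rw [div_le_div_iff₀ (by linarith) (by linarith)]
    have := slope_exp_mono hsa hsab
    nlinarith
  calc DGHK b = Real.sqrt (DGHK b ^ 2) := (Real.sqrt_sq (DGHK_pos hb').le).symm
    _ ≤ Real.sqrt (DGHK a ^ 2) := Real.sqrt_le_sqrt hsq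
    _ = DGHK a := Real.sqrt_sq (DGHK_pos ha').le

private lemma continuous_gGHK : Continuous gGHK :=
  Real.continuous_arccos.comp (Real.continuous_exp.comp (by continuity))

/-- `g` is concave and strictly increasing on `[0,∞)`, with `g(0) = 0`, `g(z) ≤ z`,
`g(z)/z → 1` as `z → 0⁺`, and `g(z) → π/2` as `z → ∞`. -/
theorem gGHK_properties :
    ConcaveOn ℝ (Set.Ici (0:ℝ)) gGHK ∧
    StrictMonoOn gGHK (Set.Ici (0:ℝ)) ∧
    gGHK 0 = 0 ∧
    (∀ z : ℝ, 0 ≤ z → gGHK z ≤ z) ∧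
    Filter.Tendsto (fun z => gGHK z / z) (nhdsWithin 0 (Set.Ioi 0)) (nhds 1) ∧
    Filter.Tendsto gGHK Filter.atTop (nhds (π / 2)) := by
  refine ⟨?_, ?_, ?_, ?_, ?_, ?_⟩
  · -- concavity
    apply AntitoneOn.concaveOn_of_deriv (convex_Ici 0) continuous_gGHK.continuousOn
    · rw [interior_Ici]
      exact fun x hx => ((hasDerivAt_gGHK hx).differentiableAt).differentiableWithinAt
    · rw [interior_Ici]
      intro a ha b hb hab
      rw [(hasDerivAt_gGHK ha).deriv, (hasDerivAt_gGHK hb).deriv]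
      exact DGHK_anti ha hb hab
  · -- strict mono
    intro a ha b hb hab
    have ha' : (0:ℝ) ≤ a := ha
    have hlt : Real.exp (-b ^ 2 / 2) < Real.exp (-a ^ 2 / 2) := by
      apply Real.exp_lt_exp.mpr
      nlinarith
    exact Real.strictAntiOn_arccos (uGHK_mem b) (uGHK_mem a) hlt
  · -- value at 0
    simp [gGHK, Real.arccos_one]
  · -- g z ≤ z
    exact fun z hz => gGHK_le hz
  · -- limit of g z / z at 0+
    have hlow : Filter.Tendsto (fun z : ℝ => Real.sqrt (1 - Real.exp (-z ^ 2)) / z)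
        (nhdsWithin 0 (Set.Ioi 0)) (nhds 1) := by
      have hquot : Filter.Tendsto (fun z : ℝ => (1 - Real.exp (-z ^ 2)) / z ^ 2)
          (nhdsWithin 0 (Set.Ioi 0)) (nhds 1) := by
        have hslope : Filter.Tendsto (slope Real.exp 0)
            (nhdsWithin 0 {(0:ℝ)}ᶜ) (nhds 1) := by
          have := hasDerivAt_iff_tendsto_slope.mp (Real.hasDerivAt_exp 0)
          rwa [Real.exp_zero] at this
        have hmap : Filter.Tendsto (fun z : ℝ => -z ^ 2)
            (nhdsWithin 0 (Set.Ioi 0)) (nhdsWithin 0 {(0:ℝ)}ᶜ) := by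
          apply tendsto_nhdsWithin_of_tendsto_nhds_of_eventually_within
          · have : Filter.Tendsto (fun z : ℝ => -z ^ 2) (nhds 0) (nhds 0) := by
              have := (continuous_pow 2).neg.tendsto (0:ℝ)
              simpa only [Pi.neg_def, Pi.neg_apply, neg_zero, ne_eq, OfNat.ofNat_ne_zero, not_false_eq_true, zero_pow] using this
            exact this.mono_left nhdsWithin_le_nhds
          · filter_upwards [self_mem_nhdsWithin] with z hz
            have : (0:ℝ) < z := hz
            simp only [Set.mem_compl_iff, Set.mem_singleton_iff]
            nlinarith
        have hcomp := hslope.comp hmap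
        apply hcomp.congr
        intro z
        rw [Function.comp_apply, slope_def_field, Real.exp_zero, sub_zero, div_neg,
          ← neg_div, neg_sub]
      have := (Real.continuous_sqrt.tendsto 1).comp hquot
      rw [Real.sqrt_one] at this
      apply this.congr'
      filter_upwards [self_mem_nhdsWithin] with z hz
      have hz' : (0:ℝ) < z := hz
      simp only [Function.comp_apply]
      have hle1 : Real.exp (-z ^ 2) < 1 := Real.exp_lt_one_iff.mpr (by nlinarith)
      rw [Real.sqrt_div (show (0:ℝ) ≤ 1 - Real.exp (-z ^ 2) by linarith),
        Real.sqrt_sq hz'.le]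
    apply tendsto_of_tendsto_of_tendsto_of_le_of_le' hlow tendsto_const_nhds
    · filter_upwards [self_mem_nhdsWithin] with z hz
      have hz' : (0:ℝ) < z := hz
      apply (div_le_div_iff_of_pos_right hz').mpr
      have hsin : Real.sin (gGHK z) = Real.sqrt (1 - Real.exp (-z ^ 2 / 2) ^ 2) :=
        Real.sin_arccos _
      have he : Real.exp (-z ^ 2 / 2) ^ 2 = Real.exp (-z ^ 2) := by
        rw [← Real.exp_nat_mul]; congr 1; push_cast; ring
      rw [he] at hsin
      calc Real.sqrt (1 - Real.exp (-z ^ 2)) = Real.sin (gGHK z) := hsin.symm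
        _ ≤ gGHK z := Real.sin_le (Real.arccos_nonneg _)
    · filter_upwards [self_mem_nhdsWithin] with z hz
      have hz' : (0:ℝ) < z := hz
      exact div_le_one_of_le₀ (gGHK_le hz'.le) hz'.le
  · -- limit at infinity
    have hneg : Filter.Tendsto (fun z : ℝ => -z ^ 2) Filter.atTop Filter.atBot := by
      have h := tendsto_neg_atTop_atBot.comp
        (tendsto_pow_atTop (by norm_num : (2:ℕ) ≠ 0) : Filter.Tendsto (fun x : ℝ => x ^ 2) Filter.atTop Filter.atTop)
      exact h
    have h1 : Filter.Tendsto (fun z : ℝ => -z ^ 2 / 2) Filter.atTop Filter.atBot :=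
      hneg.atBot_div_const (by norm_num)
    have h2 : Filter.Tendsto (fun z : ℝ => Real.exp (-z ^ 2 / 2))
        Filter.atTop (nhds 0) := Real.tendsto_exp_atBot.comp h1
    have h3 := (Real.continuous_arccos.tendsto 0).comp h2
    rw [Real.arccos_zero] at h3
    exact h3
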